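/- In a biped game where Peter's payoffs are a = 1, b = 0, c = 2 and Mary prefers outcome 2 to outcome 3 (e > f), the SPE reaches outcome 1 (payoffs (1, d)) while the PPE reaches outcome 3 (payoffs (2, f)); thus the SPE and PPE differ exactly in this preference configuration among the 18 biped games (up to symmetry, 3 of 18 games yield different equilibria). -/

import Mathlib

open Classical

/-- A finite two-player extensive-form game tree with perfect information:
leaves carry a pair of payoffs (Peter's, Mary's); internal nodes carry the
player to move (`true` = Peter, `false` = Mary) and a list of children. -/
inductive GameTree where
  | leaf (pP pM : ℤ) : GameTree
  | node (player : Bool) (children : List GameTree) : GameTree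

namespace GameTree

/-- The list of outcomes (leaf payoff pairs) of a game tree. -/
def outcomes : GameTree → List (ℤ × ℤ)
  | .leaf p m => [(p, m)]
  | .node _ ts => ts.attach.flatMap (fun t => outcomes t.1)
decreasing_by
  have := List.sizeOf_lt_of_mem t.2
  simp only [GameTree.node.sizeOf_spec]
  omega

/-- The payoff of a given player at an outcome. -/
def payOf (pl : Bool) (o : ℤ × ℤ) : ℤ := if pl then o.1 else o.2

/-- Every internal node has a nonempty list of children. -/
def WellFormed : GameTree → Prop
  | .leaf _ _ => True
  | .node _ ts => ts ≠ [] ∧ ∀ t ∈ ts.attach, WellFormed t.1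
decreasing_by
  have := List.sizeOf_lt_of_mem t.2
  simp only [GameTree.node.sizeOf_spec]
  omega

/-- Strict preferences: each player's payoffs at the outcomes are pairwise
distinct. -/
def StrictPref (g : GameTree) : Prop :=
  (g.outcomes.map Prod.fst).Nodup ∧ (g.outcomes.map Prod.snd).Nodup

/-- Target set of a Newcombian State (a list of children subtrees) with respect
to the current player's payoff `pay` and the remaining-outcome set `I`. -/
noncomputable def target (pay : ℤ × ℤ → ℤ) (I : Finset (ℤ × ℤ)) :
    List GameTree → Finset (ℤ × ℤ)
  | [] => ∅
  | [t] => I ∩ t.outcomes.toFinset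
  | t :: u :: p =>
      let Tp := target pay I (u :: p)
      (I ∩ t.outcomes.toFinset).filter
        (fun o => ¬ (Tp.Nonempty ∧ ∀ o' ∈ Tp, pay o < pay o'))

/-- `o` is discarded by some Newcombian State at a node with children `ts`,
remaining set `I` and current-player payoff `pay`. -/
def Discards (pay : ℤ × ℤ → ℤ) (ts : List GameTree) (I : Finset (ℤ × ℤ))
    (o : ℤ × ℤ) : Prop :=
  ∃ η : List GameTree, η ≠ [] ∧ (∀ t ∈ η, t ∈ ts) ∧ η.Chain' (· ≠ ·) ∧
    o ∈ I ∧ (∀ t ∈ η.head?, o ∉ t.outcomes.toFinset) ∧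
    (target pay I η).Nonempty ∧
    ∀ o' ∈ target pay I η, pay o < pay o'

/-- The set of outcomes surviving all Newcombian-State discardings at a node. -/
noncomputable def survivors (pay : ℤ × ℤ → ℤ) (ts : List GameTree)
    (I : Finset (ℤ × ℤ)) : Finset (ℤ × ℤ) :=
  I.filter (fun o => ¬ Discards pay ts I o)

/-- The Perfect Prediction Equilibrium construction: starting from the root
with remaining set `I`, at each node discard all outcomes discarded by some
Newcombian State, then move to the unique child whose outcomes contain all
remaining outcomes; the reached leaf is the PPE outcome. -/
inductive PPEReach : GameTree → Finset (ℤ × ℤ) → (ℤ × ℤ) → Prop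
  | leaf (p m : ℤ) (I : Finset (ℤ × ℤ)) (h : (p, m) ∈ I) :
      PPEReach (.leaf p m) I (p, m)
  | node (pl : Bool) (ts : List GameTree) (I : Finset (ℤ × ℤ))
      (t : GameTree) (o : ℤ × ℤ) (ht : t ∈ ts)
      (hsub : survivors (payOf pl) ts I ⊆ t.outcomes.toFinset)
      (hrec : PPEReach t (survivors (payOf pl) ts I) o) :
      PPEReach (.node pl ts) I o

/-- Backward induction (Subgame Perfect Equilibrium) outcome: at each node the
current player moves to the child whose backward-induction outcome maximizes
her payoff. -/
noncomputable def biOutcome : GameTree → ℤ × ℤ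
  | .leaf p m => (p, m)
  | .node pl ts =>
      ((ts.attach.map (fun t => biOutcome t.1)).argmax (payOf pl)).getD (0, 0)
decreasing_by
  have := List.sizeOf_lt_of_mem t.2
  simp only [GameTree.node.sizeOf_spec]
  omega

end GameTree

/-- A biped game: Peter at the root chooses between outcome 1 = (a,d) and a node
at which Mary chooses between outcome 2 = (b,e) and outcome 3 = (c,f). -/
def biped (a b c d e f : ℤ) : GameTree :=
  .node true [.leaf a d, .node false [.leaf b e, .leaf c f]]

/-! Backward induction: Mary prefers `(0, e)` to `(2, f)`, so Peter weighs `1` against `0` and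
stops at `(1, d)`. Perfect prediction: `(0, e)` is preempted at the root by the leaf `(1, d)`;
once it is gone, every outcome still reachable through Mary's node pays Peter `2 > 1`, so
`(1, d)` is discarded in turn. What remains is `(2, f)`, Peter's best outcome, which nothing
can discard. -/

namespace GameTree

variable {pay : ℤ × ℤ → ℤ} {ts : List GameTree} {I : Finset (ℤ × ℤ)} {o o' : ℤ × ℤ}
  {t u : GameTree} {p m : ℤ}

theorem biOutcome_node_pair (pl : Bool) (t u : GameTree) :
    (node pl [t, u]).biOutcome =
      if payOf pl t.biOutcome < payOf pl u.biOutcome then u.biOutcome else t.biOutcome := by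
  rw [biOutcome]
  simp only [List.argmax, List.argAux, List.attach_cons, List.attach_nil, List.map_nil,
    List.map_cons, List.foldl_cons, List.foldl_nil]
  split_ifs <;> rfl

theorem target_subset : ∀ η : List GameTree, target pay I η ⊆ I
  | [] => by simp [target]
  | [_] => Finset.inter_subset_left
  | _ :: _ :: _ => (Finset.filter_subset _ _).trans Finset.inter_subset_left

theorem target_leaf (hI : (p, m) ∈ I) : target pay I [leaf p m] = {(p, m)} := by
  simp [target, outcomes, hI]

theorem target_pair_leaf (t : GameTree) (hI : (p, m) ∈ I) :
    target pay I [t, leaf p m] =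
      (I ∩ t.outcomes.toFinset).filter (fun o => ¬ pay o < pay (p, m)) := by
  rw [target, target_leaf hI]
  simp

theorem not_discards_of_forall_le (hmax : ∀ o' ∈ I, pay o' ≤ pay o) :
    ¬ Discards pay ts I o := by
  rintro ⟨η, -, -, -, -, -, ⟨o', ho'⟩, hlt⟩
  exact (hlt o' ho').not_ge (hmax o' (target_subset η ho'))

theorem survivors_singleton (pay : ℤ × ℤ → ℤ) (ts : List GameTree) (o : ℤ × ℤ) :
    survivors pay ts {o} = {o} :=
  Finset.filter_true_of_mem fun _ ho' =>
    not_discards_of_forall_le fun _ ho'' => by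
      rw [Finset.mem_singleton.1 ho', Finset.mem_singleton.1 ho'']

theorem discards_of_lt_leaf (hleaf : leaf p m ∈ ts) (hI : (p, m) ∈ I) (ho : o ∈ I)
    (hlt : pay o < pay (p, m)) : Discards pay ts I o := by
  have hT := target_leaf (pay := pay) hI
  have hne : o ≠ (p, m) := by rintro rfl; exact hlt.false
  refine ⟨[leaf p m], by simp, by simpa using hleaf, List.isChain_singleton _, ho, ?_, ?_, ?_⟩
  · simpa [outcomes] using hne
  · simp [hT]
  · simpa [hT] using hlt

theorem discards_of_target_pair (ht : t ∈ ts) (hu : u ∈ ts) (htu : t ≠ u) (ho : o ∈ I)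
    (hot : o ∉ t.outcomes) (hT : target pay I [t, u] = {o'}) (hlt : pay o < pay o') : Discards pay ts I o := by
  refine ⟨[t, u], by simp, ?_, List.isChain_pair.2 htu, ho, by simpa using hot, ?_, ?_⟩
  · simp [ht, hu]
  · simp [hT]
  · simpa [hT] using hlt

theorem PPEReach.mem_outcomes {g : GameTree} (h : PPEReach g I o) : o ∈ g.outcomes := by
  induction h with
  | leaf => simp [outcomes]
  | node pl ts I t o ht _ _ ih =>
    rw [outcomes, List.mem_flatMap]
    exact ⟨⟨t, ht⟩, List.mem_attach _ _, ih⟩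

theorem PPEReach.node_of_survivors_eq {pl : Bool} (ht : t ∈ ts)
    (hS : survivors (payOf pl) ts I = {o}) (h : PPEReach t {o} o) :
    PPEReach (GameTree.node pl ts) I o :=
  .node pl ts I t o ht (by simpa [hS] using h.mem_outcomes) (hS ▸ h)

end GameTree

open GameTree

theorem biOutcome_biped {a b c d e f : ℤ} (hfe : f < e) (hba : b < a) :
    (biped a b c d e f).biOutcome = (a, d) := by
  simp [biped, biOutcome_node_pair, biOutcome, payOf, hfe.not_gt, hba.not_gt]

theorem survivors_biped_root {a b c d e f : ℤ} (hba : b < a) (hac : a < c) :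
    survivors (payOf true) [leaf a d, node false [leaf b e, leaf c f]]
      (biped a b c d e f).outcomes.toFinset = {(c, f)} := by
  set mary := node false [leaf b e, leaf c f]
  have hmary : mary.outcomes = [(b, e), (c, f)] := by simp [mary, outcomes]
  have hI : (biped a b c d e f).outcomes.toFinset = {(a, d), (b, e), (c, f)} := by
    simp [biped, outcomes]
  rw [hI]
  have hT : target (payOf true) {(a, d), (b, e), (c, f)} [mary, leaf a d] = {(c, f)} := by
    rw [target_pair_leaf _ (by simp), hmary]
    ext o
    simp only [Finset.mem_filter, Finset.mem_inter, List.mem_toFinset, List.mem_cons,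
      List.not_mem_nil, or_false, Finset.mem_insert, Finset.mem_singleton, payOf, if_true]
    constructor
    · rintro ⟨⟨-, rfl | rfl⟩, hnlt⟩
      exacts [absurd hba hnlt, rfl]
    · rintro rfl
      exact ⟨⟨by simp, Or.inr rfl⟩, hac.not_gt⟩
  have hdiscard_b : Discards (payOf true) [leaf a d, mary] {(a, d), (b, e), (c, f)} (b, e) :=
    discards_of_lt_leaf List.mem_cons_self (by simp) (by simp) hba
  have hdiscard_a : Discards (payOf true) [leaf a d, mary] {(a, d), (b, e), (c, f)} (a, d) :=
    discards_of_target_pair (by simp) (by simp) (by simp [mary]) (by simp)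
      (by simp [hmary, hba.ne', hac.ne]) hT hac
  have hkeep_c : ¬ Discards (payOf true) [leaf a d, mary] {(a, d), (b, e), (c, f)} (c, f) :=
    not_discards_of_forall_le (by simp [payOf, (hba.trans hac).le, hac.le])
  ext o
  simp only [survivors, Finset.mem_filter, Finset.mem_insert, Finset.mem_singleton]
  constructor
  · rintro ⟨rfl | rfl | rfl, hkeep⟩
    exacts [absurd hdiscard_a hkeep, absurd hdiscard_b hkeep, rfl]
  · rintro rfl
    exact ⟨by simp, hkeep_c⟩

theorem ppeReach_biped {a b c d e f : ℤ} (hba : b < a) (hac : a < c) :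
    PPEReach (biped a b c d e f) (biped a b c d e f).outcomes.toFinset (c, f) :=
  .node_of_survivors_eq (t := node false [leaf b e, leaf c f]) (by simp)
    (survivors_biped_root hba hac) <|
    .node_of_survivors_eq (by simp) (survivors_singleton _ _ _)
      (.leaf c f _ (Finset.mem_singleton_self _))

theorem biped_case_one_ne_general (d e f : ℤ) (hef : f < e) :
    (biped 1 0 2 d e f).biOutcome = (1, d) ∧
    GameTree.PPEReach (biped 1 0 2 d e f)
      (biped 1 0 2 d e f).outcomes.toFinset (2, f) ∧
    ((1, d) : ℤ × ℤ) ≠ ((2, f) : ℤ × ℤ) :=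
  ⟨biOutcome_biped hef one_pos, ppeReach_biped one_pos one_lt_two, by simp⟩

/-- in a biped game with Peter's payoffs a = 1, b = 0, c = 2 and
Mary preferring outcome 2 to outcome 3 (e > f), the SPE reaches outcome 1 with
payoffs (1,d) while the PPE reaches outcome 3 with payoffs (2,f); in particular
the two equilibria differ. -/
theorem biped_case_one_ne (d e f : ℤ)
    (hmem : d ∈ ({0, 1, 2} : Set ℤ) ∧ e ∈ ({0, 1, 2} : Set ℤ) ∧
      f ∈ ({0, 1, 2} : Set ℤ))
    (hMary : d ≠ e ∧ d ≠ f ∧ e ≠ f) (hef : f < e) :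
    (biped 1 0 2 d e f).biOutcome = (1, d) ∧
    GameTree.PPEReach (biped 1 0 2 d e f)
      (biped 1 0 2 d e f).outcomes.toFinset (2, f) ∧
    ((1, d) : ℤ × ℤ) ≠ ((2, f) : ℤ × ℤ) :=
  biped_case_one_ne_general d e f hef
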